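/- arXiv:math/0701212 — 3 statements merged into one kernel-verified Lean document; each statement's English description precedes it below -/
import Mathlib

section
/- Let k ≥ 2 be an integer, α > 1, and 0 < λ, δ ≤ 1. Define I_{k,α}(r) = r^{k/(k-1)} for 0 ≤ r ≤ 1 and I_{k,α}(r) = r^{α/(α-1)} for r > 1. If L > 0 and (t_i)_{i∈ℕ} is a sequence of reals with 0 ≤ t_i < δL for all i and λ·∑_{i=1}^∞ t_i ≤ L, then ∑_{i=1}^∞ I_{k,α}(t_i) ≤ (2(1+δλ)/λ)·max{(2δ)^{1/(k-1)}, (2δ)^{1/(α-1)}}·I_{k,α}(L). -/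
/-- The piecewise power function `I_{k,α}`. -/
noncomputable def Ika (k : ℕ) (α : ℝ) (r : ℝ) : ℝ :=
  if r ≤ 1 then r ^ ((k : ℝ) / ((k : ℝ) - 1)) else r ^ (α / (α - 1))

/-- General piecewise power function. -/
noncomputable def Jpq (p q : ℝ) (r : ℝ) : ℝ :=
  if r ≤ 1 then r ^ p else r ^ q

lemma Jpq_nonneg (p q r : ℝ) (hr : 0 ≤ r) : 0 ≤ Jpq p q r := by
  unfold Jpq; split <;> exact Real.rpow_nonneg hr _

lemma rpow_split (x e : ℝ) (hx : 0 < x) : x ^ e = x * x ^ (e - 1) := by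
  have h := Real.rpow_add hx 1 (e - 1)
  rw [Real.rpow_one] at h
  rw [show (1:ℝ) + (e - 1) = e by ring] at h
  exact h

lemma Jpq_mono (p q r s : ℝ) (hp : 1 < p) (hq : 1 < q)
    (hr : 0 ≤ r) (hrs : r ≤ s) (hs : 0 < s) :
    Jpq p q r * s ≤ Jpq p q s * r := by
  rcases eq_or_lt_of_le hr with h0 | h0
  · have : Jpq p q r = 0 := by
      rw [← h0]
      unfold Jpq
      rw [if_pos zero_le_one, Real.zero_rpow (by positivity)]
    rw [this, ← h0]; simp
  · unfold Jpq
    by_cases hr1 : r ≤ 1 <;> by_cases hs1 : s ≤ 1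
    · rw [if_pos hr1, if_pos hs1]
      rw [rpow_split r p h0, rpow_split s p hs]
      have h1 : r ^ (p-1) ≤ s ^ (p-1) := Real.rpow_le_rpow h0.le hrs (by linarith)
      nlinarith [mul_le_mul_of_nonneg_left h1 (mul_pos h0 hs).le]
    · rw [if_pos hr1, if_neg hs1]
      push_neg at hs1
      have h1 : r ^ p ≤ r := by
        calc r ^ p ≤ r ^ (1:ℝ) := Real.rpow_le_rpow_of_exponent_ge h0 hr1 hp.le
          _ = r := Real.rpow_one r
      have h2 : s ≤ s ^ q := by
        calc s = s ^ (1:ℝ) := (Real.rpow_one s).symm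
          _ ≤ s ^ q := Real.rpow_le_rpow_of_exponent_le hs1.le hq.le
      nlinarith
    · exact absurd (hrs.trans hs1) (not_le.2 (not_le.1 hr1))
    · rw [if_neg hr1, if_neg hs1]
      rw [rpow_split r q h0, rpow_split s q hs]
      push_neg at hr1
      have h1 : r ^ (q-1) ≤ s ^ (q-1) := Real.rpow_le_rpow h0.le hrs (by linarith)
      nlinarith [mul_le_mul_of_nonneg_left h1 (mul_pos h0 hs).le]
    
lemma Jpq_key (p q δ L : ℝ) (hp : 1 < p) (hq : 1 < q)
    (hδ : 0 < δ) (hδ' : δ ≤ 1) (hL : 0 < L) :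
    Jpq p q (δ * L) ≤ 2 * δ * max ((2*δ) ^ (p-1)) ((2*δ) ^ (q-1)) * Jpq p q L := by
  set M : ℝ := max ((2*δ) ^ (p-1)) ((2*δ) ^ (q-1)) with hMdef
  have h2δ : (0:ℝ) < 2 * δ := by linarith
  have hM0 : 0 ≤ M := le_trans (Real.rpow_nonneg h2δ.le _) (le_max_left _ _)
  have hML1 : (2*δ) ^ (p-1) ≤ M := le_max_left _ _
  have hML2 : (2*δ) ^ (q-1) ≤ M := le_max_right _ _
  have hs : 0 < δ * L := mul_pos hδ hL
  have hsplitp : (2*δ) ^ p = 2 * δ * (2*δ) ^ (p-1) := rpow_split _ _ h2δ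
  have hsplitq : (2*δ) ^ q = 2 * δ * (2*δ) ^ (q-1) := rpow_split _ _ h2δ
  by_cases hs1 : δ * L ≤ 1
  · by_cases hL1 : L ≤ 1
    · unfold Jpq
      rw [if_pos hs1, if_pos hL1]
      have h4 : 0 ≤ L ^ p := Real.rpow_nonneg hL.le _
      calc (δ*L) ^ p = δ ^ p * L ^ p := Real.mul_rpow hδ.le hL.le
        _ ≤ (2*δ) ^ p * L ^ p :=
            mul_le_mul_of_nonneg_right
              (Real.rpow_le_rpow hδ.le (by linarith) (by linarith)) h4
        _ = 2 * δ * (2*δ) ^ (p-1) * L ^ p := by rw [hsplitp]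
        _ ≤ 2 * δ * M * L ^ p := by gcongr
    · push_neg at hL1
      unfold Jpq
      rw [if_pos hs1, if_neg (not_le.2 hL1)]
      have hLq0 : 0 ≤ L ^ q := Real.rpow_nonneg hL.le _
      by_cases hpq : p ≤ q
      · have h1 : L ^ p ≤ L ^ q := Real.rpow_le_rpow_of_exponent_le hL1.le hpq
        calc (δ*L) ^ p ≤ (2*δ*L) ^ p :=
              Real.rpow_le_rpow hs.le (by nlinarith) (by linarith)
          _ = (2*δ) ^ p * L ^ p := Real.mul_rpow h2δ.le hL.le
          _ ≤ (2*δ) ^ p * L ^ q :=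
              mul_le_mul_of_nonneg_left h1 (Real.rpow_nonneg h2δ.le _)
          _ = 2 * δ * (2*δ) ^ (p-1) * L ^ q := by rw [hsplitp]
          _ ≤ 2 * δ * M * L ^ q := by gcongr
      · push_neg at hpq
        have hgoal : (δ*L) ^ p ≤ (2*δ*L) ^ q := by
          by_cases hx : 2*δ*L ≤ 1
          · calc (δ*L) ^ p ≤ (δ*L) ^ q :=
                  Real.rpow_le_rpow_of_exponent_ge hs hs1 hpq.le
              _ ≤ (2*δ*L) ^ q :=
                  Real.rpow_le_rpow hs.le (by nlinarith) (by linarith)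
          · push_neg at hx
            calc (δ*L) ^ p ≤ 1 ^ p := Real.rpow_le_rpow hs.le hs1 (by linarith)
              _ = 1 := Real.one_rpow _
              _ ≤ (2*δ*L) ^ q := Real.one_le_rpow hx.le (by linarith)
        calc (δ*L) ^ p ≤ (2*δ*L) ^ q := hgoal
          _ = (2*δ) ^ q * L ^ q := Real.mul_rpow h2δ.le hL.le
          _ = 2 * δ * (2*δ) ^ (q-1) * L ^ q := by rw [hsplitq]
          _ ≤ 2 * δ * M * L ^ q := by gcongr
  · push_neg at hs1
    have hL1 : 1 < L := by nlinarith
    unfold Jpq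
    rw [if_neg (not_le.2 hs1), if_neg (not_le.2 hL1)]
    have hLq0 : 0 ≤ L ^ q := Real.rpow_nonneg hL.le _
    calc (δ*L) ^ q ≤ (2*δ*L) ^ q :=
          Real.rpow_le_rpow hs.le (by nlinarith) (by linarith)
      _ = (2*δ) ^ q * L ^ q := Real.mul_rpow h2δ.le hL.le
      _ = 2 * δ * (2*δ) ^ (q-1) * L ^ q := by rw [hsplitq]
      _ ≤ 2 * δ * M * L ^ q := by gcongr

theorem stmt0 (k : ℕ) (hk : 2 ≤ k) (α : ℝ) (hα : 1 < α)
    (lam δ : ℝ) (hlam : 0 < lam) (hlam' : lam ≤ 1) (hδ : 0 < δ) (hδ' : δ ≤ 1)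
    (L : ℝ) (hL : 0 < L) (t : ℕ → ℝ) (ht0 : ∀ i, 0 ≤ t i) (ht1 : ∀ i, t i < δ * L)
    (hsum : Summable t) (htot : lam * (∑' i, t i) ≤ L) :
    (∑' i, Ika k α (t i)) ≤
      (2 * (1 + δ * lam) / lam) *
        max ((2 * δ) ^ (1 / ((k : ℝ) - 1))) ((2 * δ) ^ (1 / (α - 1))) * Ika k α L := by
  have hk1 : (1:ℝ) < (k:ℝ) := by
    have : (2:ℝ) ≤ (k:ℝ) := by exact_mod_cast hk
    linarith
  have hkm : (0:ℝ) < (k:ℝ) - 1 := by linarith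
  have hαm : (0:ℝ) < α - 1 := by linarith
  have hIJ : Ika k α = Jpq ((k:ℝ) / ((k:ℝ) - 1)) (α / (α - 1)) := rfl
  set p : ℝ := (k:ℝ) / ((k:ℝ) - 1) with hpdef
  set q : ℝ := α / (α - 1) with hqdef
  have hp1 : 1 < p := (one_lt_div hkm).2 (by linarith)
  have hq1 : 1 < q := (one_lt_div hαm).2 (by linarith)
  have hpm : (1:ℝ) / ((k:ℝ) - 1) = p - 1 := by rw [hpdef]; field_simp; ring
  have hqm : (1:ℝ) / (α - 1) = q - 1 := by rw [hqdef]; field_simp; ring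
  rw [hIJ, hpm, hqm]
  set M : ℝ := max ((2*δ) ^ (p-1)) ((2*δ) ^ (q-1)) with hMdef
  have h2δ : (0:ℝ) < 2 * δ := by linarith
  have hM0 : 0 ≤ M := le_trans (Real.rpow_nonneg h2δ.le _) (le_max_left _ _)
  set s : ℝ := δ * L with hsdef
  have hs : 0 < s := mul_pos hδ hL
  set C : ℝ := Jpq p q s / s with hCdef
  have hIs0 : 0 ≤ Jpq p q s := Jpq_nonneg _ _ _ hs.le
  have hC0 : 0 ≤ C := div_nonneg hIs0 hs.le
  have hpt : ∀ i, Jpq p q (t i) ≤ C * t i := by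
    intro i
    rw [hCdef, div_mul_eq_mul_div, le_div_iff₀ hs]
    exact Jpq_mono p q (t i) s hp1 hq1 (ht0 i) (ht1 i).le hs
  have hInn : ∀ i, 0 ≤ Jpq p q (t i) := fun i => Jpq_nonneg _ _ _ (ht0 i)
  have hsum2 : Summable (fun i => Jpq p q (t i)) :=
    Summable.of_nonneg_of_le hInn hpt (hsum.mul_left C)
  have step1 : (∑' i, Jpq p q (t i)) ≤ C * (∑' i, t i) := by
    calc (∑' i, Jpq p q (t i)) ≤ ∑' i, C * t i := Summable.tsum_le_tsum hpt hsum2 (hsum.mul_left C)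
      _ = C * (∑' i, t i) := tsum_mul_left
  have hT : (∑' i, t i) ≤ L / lam := by
    rw [le_div_iff₀ hlam]; linarith [htot]
  have step2 : C * (∑' i, t i) ≤ C * (L / lam) := mul_le_mul_of_nonneg_left hT hC0
  have hB : Jpq p q s ≤ 2 * δ * M * Jpq p q L := Jpq_key p q δ L hp1 hq1 hδ hδ' hL
  have hIL0 : 0 ≤ Jpq p q L := Jpq_nonneg _ _ _ hL.le
  have step3 : C * (L / lam) ≤ (2 * (1 + δ * lam) / lam) * M * Jpq p q L := by
    have e1 : C * (L / lam) = Jpq p q s / (δ * lam) := by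
      rw [hCdef, hsdef]
      field_simp
    rw [e1, div_le_iff₀ (by positivity)]
    have e2 : 2 * (1 + δ * lam) / lam * M * Jpq p q L * (δ * lam)
        = 2 * (1 + δ * lam) * (δ * (M * Jpq p q L)) := by
      field_simp
    rw [e2]
    have hMI : 0 ≤ δ * (M * Jpq p q L) := by positivity
    calc Jpq p q s ≤ 2 * δ * M * Jpq p q L := hB
      _ = 2 * (δ * (M * Jpq p q L)) := by ring
      _ ≤ 2 * (1 + δ * lam) * (δ * (M * Jpq p q L)) := by
          apply mul_le_mul_of_nonneg_right _ hMI
          nlinarith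
  calc (∑' i, Jpq p q (t i)) ≤ C * (∑' i, t i) := step1
    _ ≤ C * (L / lam) := step2
    _ ≤ (2 * (1 + δ * lam) / lam) * M * Jpq p q L := step3
end

section
/- Let k ≥ 2 be an integer, α > 1, and 0 < λ, δ ≤ 1. Suppose (t_i)_{i∈ℕ} is a summable sequence of nonnegative reals with t_i < δL for every i and λ·∑ t_i ≤ L, where L > 0. Then there exist integers 0 = m_0 < m_1 < ⋯ < m_{j_0} such that δL < t_{m_{i-1}+1} + ⋯ + t_{m_i} < 2δL for each i = 1, …, j_0, the tail sum ∑_{n > m_{j_0}} t_n ≤ δL, and j_0 ≤ 1/(λδ). -/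
theorem stmt1 (k : ℕ) (hk : 2 ≤ k) (α : ℝ) (hα : 1 < α)
    (lam δ : ℝ) (hlam : 0 < lam) (hlam' : lam ≤ 1) (hδ : 0 < δ) (hδ' : δ ≤ 1)
    (L : ℝ) (hL : 0 < L) (t : ℕ → ℝ) (ht0 : ∀ i, 0 ≤ t i) (ht1 : ∀ i, t i < δ * L)
    (hsum : Summable t) (htot : lam * (∑' i, t i) ≤ L) :
    ∃ (j₀ : ℕ) (m : ℕ → ℕ), m 0 = 0 ∧ (∀ i < j₀, m i < m (i + 1)) ∧
      (∀ i, 1 ≤ i → i ≤ j₀ →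
        δ * L < ∑ n ∈ Finset.Ioc (m (i - 1)) (m i), t n ∧
        ∑ n ∈ Finset.Ioc (m (i - 1)) (m i), t n < 2 * δ * L) ∧
      (∑' n : {n : ℕ // m j₀ < n}, t n) ≤ δ * L ∧
      (j₀ : ℝ) ≤ 1 / (lam * δ) := by
  classical
  have hδL : 0 < δ * L := mul_pos hδ hL
  let T : ℕ → ℝ := fun s => ∑' (n : {n : ℕ // s < n}), t n
  have hind : ∀ s : ℕ, Summable ((Set.Ioi s).indicator t) := fun s => hsum.indicator _
  have hTeq : ∀ s, T s = ∑' n, (Set.Ioi s).indicator t n := fun s => tsum_subtype (Set.Ioi s) t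
  have hindnn : ∀ s n, 0 ≤ (Set.Ioi s).indicator t n := fun s n =>
    Set.indicator_apply_nonneg (fun _ => ht0 n)
  have lemA : ∀ s m, ∑ n ∈ Finset.Ioc s m, t n ≤ T s := by
    intro s m
    rw [hTeq]
    calc ∑ n ∈ Finset.Ioc s m, t n = ∑ n ∈ Finset.Ioc s m, (Set.Ioi s).indicator t n := by
          refine Finset.sum_congr rfl fun n hn => ?_
          exact (Set.indicator_of_mem ((Finset.mem_Ioc.1 hn).1) t).symm
      _ ≤ _ := Summable.sum_le_tsum _ (fun n _ => hindnn s n) (hind s)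
  have lemB : ∀ s c, (∀ m, ∑ n ∈ Finset.Ioc s m, t n ≤ c) → T s ≤ c := by
    intro s c h
    rw [hTeq]
    apply Summable.tsum_le_of_sum_le (hind s)
    intro F
    calc ∑ n ∈ F, (Set.Ioi s).indicator t n
        = ∑ n ∈ F, (if s < n then t n else 0) := by
          refine Finset.sum_congr rfl fun n _ => ?_
          simp [Set.indicator_apply, Set.mem_Ioi]
      _ = ∑ n ∈ F.filter (fun n => s < n), t n := (Finset.sum_filter _ _).symm
      _ ≤ ∑ n ∈ Finset.Ioc s (F.sup id), t n := by
          refine Finset.sum_le_sum_of_subset_of_nonneg ?_ (fun n _ _ => ht0 n)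
          intro n hn
          obtain ⟨hnF, hns⟩ := Finset.mem_filter.1 hn
          exact Finset.mem_Ioc.2 ⟨hns, Finset.le_sup (f := id) hnF⟩
      _ ≤ c := h _
  have step : ∀ s, δ * L < T s → ∃ m, s < m ∧ δ * L < ∑ n ∈ Finset.Ioc s m, t n ∧
      ∑ n ∈ Finset.Ioc s m, t n < 2 * δ * L := by
    intro s hs
    have hex : ∃ m, δ * L < ∑ n ∈ Finset.Ioc s m, t n := by
      by_contra h
      push_neg at h
      exact absurd (lemB s _ h) (not_le.2 hs)
    have hm : δ * L < ∑ n ∈ Finset.Ioc s (Nat.find hex), t n := Nat.find_spec hex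
    have hsm : s < Nat.find hex := by
      by_contra h
      push_neg at h
      rw [Finset.Ioc_eq_empty (not_lt.2 h), Finset.sum_empty] at hm
      linarith
    obtain ⟨m', hm'⟩ : ∃ m', Nat.find hex = m' + 1 := ⟨Nat.find hex - 1, by omega⟩
    have hsm' : s ≤ m' := by omega
    have h1 : ∑ n ∈ Finset.Ioc s m', t n ≤ δ * L :=
      not_lt.1 (Nat.find_min hex (by omega))
    refine ⟨Nat.find hex, hsm, hm, ?_⟩
    rw [hm', Finset.sum_Ioc_succ_top hsm']
    have := ht1 (m' + 1)
    rw [hm', Finset.sum_Ioc_succ_top hsm'] at hm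
    linarith
  obtain ⟨g, hg⟩ : ∃ g : ℕ → ℕ, ∀ s, δ * L < T s → s < g s ∧
      δ * L < ∑ n ∈ Finset.Ioc s (g s), t n ∧ ∑ n ∈ Finset.Ioc s (g s), t n < 2 * δ * L :=
    ⟨fun s => if h : δ * L < T s then Classical.choose (step s h) else s + 1,
     fun s h => by simp only [dif_pos h]; exact Classical.choose_spec (step s h)⟩
  obtain ⟨mseq, hm0, hmsucc⟩ : ∃ m : ℕ → ℕ, m 0 = 0 ∧ ∀ i, m (i + 1) = g (m i) :=
    ⟨fun i => g^[i] 0, rfl, fun i => Function.iterate_succ_apply' g i 0⟩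
  have tele : ∀ j, (∀ i < j, δ * L < T (mseq i)) →
      (j : ℝ) * (δ * L) ≤ ∑ n ∈ Finset.Ioc 0 (mseq j), t n := by
    intro j
    induction j with
    | zero => intro _; simp [hm0]
    | succ j ih =>
      intro h
      have hj := h j (Nat.lt_succ_self j)
      have hgj := hg (mseq j) hj
      rw [← hmsucc j] at hgj
      have hsplit : ∑ n ∈ Finset.Ioc 0 (mseq j), t n +
          ∑ n ∈ Finset.Ioc (mseq j) (mseq (j + 1)), t n =
          ∑ n ∈ Finset.Ioc 0 (mseq (j + 1)), t n :=
        Finset.sum_Ioc_consecutive _ (Nat.zero_le _) (le_of_lt hgj.1)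
      have hih := ih (fun i hi => h i (by omega))
      push_cast
      linarith [hgj.2.1]
  have bound : ∀ j, (∀ i < j, δ * L < T (mseq i)) → (j : ℝ) ≤ 1 / (lam * δ) := by
    intro j h
    have h1 : (j : ℝ) * (δ * L) ≤ ∑' i, t i :=
      (tele j h).trans (Summable.sum_le_tsum _ (fun n _ => ht0 n) hsum)
    have h2 : lam * ((j : ℝ) * (δ * L)) ≤ L :=
      le_trans (by nlinarith) htot
    rw [le_div_iff₀ (mul_pos hlam hδ)]
    nlinarith
  have hstop : ∃ j, T (mseq j) ≤ δ * L := by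
    by_contra h
    push_neg at h
    have hb := bound (⌈1 / (lam * δ)⌉₊ + 1) (fun i _ => h i)
    have hc := Nat.le_ceil (1 / (lam * δ))
    push_cast at hb
    linarith
  refine ⟨Nat.find hstop, mseq, hm0, ?_, ?_, ?_, ?_⟩
  · intro i hi
    have hlt : δ * L < T (mseq i) := lt_of_not_ge (Nat.find_min hstop hi)
    rw [hmsucc i]
    exact (hg _ hlt).1
  · intro i hi1 hi2
    have hlt : δ * L < T (mseq (i - 1)) :=
      lt_of_not_ge (Nat.find_min hstop (by omega))
    have hgi := hg _ hlt
    have : mseq i = g (mseq (i - 1)) := by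
      conv_lhs => rw [show i = (i - 1) + 1 by omega]
      exact hmsucc (i - 1)
    rw [this]
    exact ⟨hgi.2.1, hgi.2.2⟩
  · exact Nat.find_spec hstop
  · exact bound _ (fun i hi => lt_of_not_ge (Nat.find_min hstop hi))
end

section
/- Let V be an n-dimensional real normed vector space, n ≥ 1. Then there exist a basis v_1, …, v_n of V and linear functionals v_1^*, …, v_n^* on V such that ‖v_i‖ = 1 and the operator norm ‖v_i^*‖ = 1 for all i, and v_i^*(v_j) = δ_{ij} for all i, j (Auerbach basis). -/
/-- Auerbach basis lemma. -/
theorem stmt7 {V : Type*} [NormedAddCommGroup V] [NormedSpace ℝ V]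
    [FiniteDimensional ℝ V] (n : ℕ) (hn : 1 ≤ n) (hdim : Module.finrank ℝ V = n) :
    ∃ (b : Module.Basis (Fin n) ℝ V) (f : Fin n → V →L[ℝ] ℝ),
      (∀ i, ‖b i‖ = 1) ∧ (∀ i, ‖f i‖ = 1) ∧
      (∀ i j, f i (b j) = if i = j then 1 else 0) := by
  have hpos : 0 < Module.finrank ℝ V := by omega
  have : Nontrivial V := Module.nontrivial_of_finrank_pos hpos
  let e : Module.Basis (Fin n) ℝ V := Module.finBasisOfFinrankEq ℝ V hdim
  set D : (Fin n → V) → ℝ := fun v => e.det v with hDdef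
  have hD : Continuous D := by
    have hEq : D = fun v => Matrix.det (e.toMatrix v) := by
      funext v; exact e.det_apply v
    rw [hEq]
    exact Continuous.matrix_det <| continuous_pi fun i => continuous_pi fun j =>
      ((e.coord i).continuous_of_finiteDimensional).comp (continuous_apply j)
  set S : Set (Fin n → V) := Set.univ.pi fun _ => Metric.sphere (0 : V) 1 with hSdef
  have hScompact : IsCompact S := isCompact_univ_pi fun _ => isCompact_sphere 0 1
  -- normalized basis vectors lie in S
  have he0 : ∀ i, e i ≠ 0 := fun i => e.ne_zero i
  let u : Fin n → V := fun i => ‖e i‖⁻¹ • e i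
  have hu_norm : ∀ i, ‖u i‖ = 1 := by
    intro i
    have h : ‖e i‖ ≠ 0 := norm_ne_zero_iff.mpr (he0 i)
    simp [u, norm_smul, abs_of_nonneg (inv_nonneg.mpr (norm_nonneg _)), inv_mul_cancel₀ h]
  have huS : u ∈ S := by
    intro i _
    simpa [mem_sphere_zero_iff_norm] using hu_norm i
  have hSne : S.Nonempty := ⟨u, huS⟩
  -- maximize |D|
  obtain ⟨v, hvS, hvmax⟩ := hScompact.exists_isMaxOn hSne
    ((continuous_abs.comp hD).continuousOn)
  have hvmax' : ∀ w ∈ S, |D w| ≤ |D v| := fun w hw => hvmax hw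
  have hv_norm : ∀ i, ‖v i‖ = 1 := by
    intro i
    have := Set.mem_univ_pi.mp hvS i
    simpa [mem_sphere_zero_iff_norm] using this
  -- D u ≠ 0
  have hDu : D u ≠ 0 := by
    have : e.det u = (∏ i, ‖e i‖⁻¹) • e.det e := by
      simpa [u] using e.det.toMultilinearMap.map_smul_univ (fun i => ‖e i‖⁻¹) e
    rw [hDdef]
    simp only [this, e.det_self, smul_eq_mul, mul_one]
    exact Finset.prod_ne_zero_iff.mpr fun i _ =>
      inv_ne_zero (norm_ne_zero_iff.mpr (he0 i))
  have hDv : D v ≠ 0 := by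
    intro h
    have := hvmax' u huS
    rw [h] at this
    simp only [abs_zero] at this
    exact hDu (abs_eq_zero.mp (le_antisymm this (abs_nonneg _)))
  -- v is a basis
  have hbasis := (Module.Basis.is_basis_iff_det e (v := v)).mpr (isUnit_iff_ne_zero.mpr hDv)
  let b : Module.Basis (Fin n) ℝ V := Module.Basis.mk hbasis.1 hbasis.2.ge
  have hb : ∀ i, b i = v i := fun i => by simp [b]
  -- the dual functionals
  let g : Fin n → V →ₗ[ℝ] ℝ := fun i =>
    (D v)⁻¹ • (e.det.toMultilinearMap.toLinearMap v i)
  have hg_apply : ∀ i x, g i x = (D v)⁻¹ * e.det (Function.update v i x) := by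
    intro i x; simp [g, MultilinearMap.toLinearMap]
  let f : Fin n → V →L[ℝ] ℝ := fun i => LinearMap.toContinuousLinearMap (g i)
  have hf_apply : ∀ i x, f i x = (D v)⁻¹ * e.det (Function.update v i x) := by
    intro i x; simpa [f] using hg_apply i x
  have hdelta : ∀ i j, f i (b j) = if i = j then 1 else 0 := by
    intro i j
    rw [hb, hf_apply]
    by_cases h : i = j
    · subst h
      simp [Function.update_eq_self]
      exact inv_mul_cancel₀ hDv
    · have : e.det (Function.update v i (v j)) = 0 := by
        apply e.det.map_eq_zero_of_eq _ (i := i) (j := j)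
        · simp [Function.update_self, Function.update_of_ne (Ne.symm h)]
        · exact h
      simp [this, h]
  -- norm bound ≤ 1
  have hle : ∀ i, ‖f i‖ ≤ 1 := by
    intro i
    apply ContinuousLinearMap.opNorm_le_bound _ zero_le_one
    intro x
    rcases eq_or_ne x 0 with rfl | hx
    · have h0 : e.det (Function.update v i 0) = 0 := e.det.toMultilinearMap.map_update_zero v i
      simp [hf_apply, h0]
    · have hxn : ‖x‖ ≠ 0 := norm_ne_zero_iff.mpr hx
      set w : Fin n → V := Function.update v i (‖x‖⁻¹ • x) with hw
      have hwS : w ∈ S := by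
        intro j _
        rcases eq_or_ne j i with rfl | hj
        · simp [w, mem_sphere_zero_iff_norm, norm_smul,
            abs_of_nonneg (inv_nonneg.mpr (norm_nonneg x)), inv_mul_cancel₀ hxn]
        · simp [w, Function.update_of_ne hj, mem_sphere_zero_iff_norm, hv_norm j]
      have hDw : D w = ‖x‖⁻¹ * e.det (Function.update v i x) := by
        have h1 : e.det (Function.update v i (‖x‖⁻¹ • x))
            = ‖x‖⁻¹ • e.det (Function.update v i x) :=
          e.det.toMultilinearMap.map_update_smul v i _ x
        rw [hDdef, hw]
        exact h1.trans (smul_eq_mul ..)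
      have hbound := hvmax' w hwS
      rw [hDw, abs_mul, abs_of_nonneg (inv_nonneg.mpr (norm_nonneg x))] at hbound
      have key : |e.det (Function.update v i x)| ≤ ‖x‖ * |D v| := by
        rw [inv_mul_le_iff₀ (lt_of_le_of_ne (norm_nonneg x) (Ne.symm hxn))] at hbound
        exact hbound
      have : |f i x| ≤ 1 * ‖x‖ := by
        rw [hf_apply, abs_mul, abs_inv, one_mul]
        calc |D v|⁻¹ * |e.det (Function.update v i x)|
            ≤ |D v|⁻¹ * (‖x‖ * |D v|) := by
              apply mul_le_mul_of_nonneg_left key (inv_nonneg.mpr (abs_nonneg _))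
          _ = ‖x‖ := by
              field_simp
      calc ‖f i x‖ = |f i x| := rfl
        _ ≤ 1 * ‖x‖ := this
  have hnorm : ∀ i, ‖f i‖ = 1 := by
    intro i
    refine le_antisymm (hle i) ?_
    have h1 : f i (b i) = 1 := by simp [hdelta]
    have := (f i).le_opNorm (b i)
    rw [h1, hb, hv_norm, mul_one] at this
    simpa using this
  exact ⟨b, f, fun i => by rw [hb]; exact hv_norm i, hnorm, hdelta⟩
end
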